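/- arXiv:1609.00309 — 4 statements merged into one kernel-verified Lean document; each statement's English description precedes it below -/
import Mathlib

section
/- Let ω_k = √(M_k) where M_1 < ... < M_b are distinct square-free integers greater than 1. If n_1, ..., n_b are integers with some n_k ≠ 0 and some n_ℓ ≠ 0 for k ≠ ℓ, then for every natural number N, ∑_k n_kω_k + √N ≠ 0 and ∑_k n_kω_k − √N ≠ 0. -/
/-!
For a finite set `P` of primes let `K_P = ℚ(√p : p ∈ P)`. By induction on `P`, `√m ∉ K_P` as soon
as some prime `q ∉ P` divides `m` to an odd power: writing `√m = a + b√p` with `a, b ∈ K_{P \ p}`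
and squaring, `ab ≠ 0` would put `√p` in `K_{P \ p}`, while `b = 0` or `a = 0` puts `√m` or `√(mp)`
there. Consequently a vanishing rational combination of square roots of distinct squarefree numbers
splits as `X + √p Y = 0` with `X, Y ∈ K_{P \ p}`, which forces `X = Y = 0`; so these square roots
are linearly independent over `ℚ`, and the theorem follows by writing `N = g²m` with `m` squarefree.
-/

open Real

theorem Algebra.exists_add_mul_of_mem_adjoin_insert {R A : Type*} [CommSemiring R] [CommSemiring A]
    [Algebra R A] {s : Set A} {α : A} (hα : α ^ 2 ∈ Algebra.adjoin R s) {x : A}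
    (hx : x ∈ Algebra.adjoin R (insert α s)) :
    ∃ a ∈ Algebra.adjoin R s, ∃ b ∈ Algebra.adjoin R s, x = a + b * α := by
  induction hx using Algebra.adjoin_induction with
  | mem x hx =>
    rcases hx with rfl | hx
    · exact ⟨0, zero_mem _, 1, one_mem _, by ring⟩
    · exact ⟨x, Algebra.subset_adjoin hx, 0, zero_mem _, by ring⟩
  | algebraMap r => exact ⟨algebraMap R A r, Subalgebra.algebraMap_mem _ r, 0, zero_mem _, by ring⟩
  | add x y _ _ hx hy =>
    obtain ⟨a, ha, b, hb, rfl⟩ := hx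
    obtain ⟨c, hc, d, hd, rfl⟩ := hy
    exact ⟨a + c, add_mem ha hc, b + d, add_mem hb hd, by ring⟩
  | mul x y _ _ hx hy =>
    obtain ⟨a, ha, b, hb, rfl⟩ := hx
    obtain ⟨c, hc, d, hd, rfl⟩ := hy
    exact ⟨a * c + b * d * α ^ 2, add_mem (mul_mem ha hc) (mul_mem (mul_mem hb hd) hα),
      a * d + b * c, add_mem (mul_mem ha hd) (mul_mem hb hc), by ring⟩

theorem IntermediateField.exists_add_mul_of_mem_adjoin_insert {F E : Type*} [Field F] [Field E]
    [Algebra F E] {s : Set E} (hs : ∀ x ∈ s, IsIntegral F x) {α : E}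
    (hα : α ^ 2 ∈ IntermediateField.adjoin F s) {x : E}
    (hx : x ∈ IntermediateField.adjoin F (insert α s)) :
    ∃ a ∈ IntermediateField.adjoin F s, ∃ b ∈ IntermediateField.adjoin F s, x = a + b * α := by
  rw [← IntermediateField.mem_toSubalgebra,
    IntermediateField.adjoin_toSubalgebra_of_isAlgebraic fun y hy => (hs y hy).isAlgebraic] at hα
  have hα_int : IsIntegral F α :=
    .of_pow two_pos (Algebra.adjoin_le (S := integralClosure F E) hs hα)
  rw [← IntermediateField.mem_toSubalgebra, IntermediateField.adjoin_toSubalgebra_of_isAlgebraic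
    (Set.forall_mem_insert.2 ⟨hα_int, hs⟩ · · |>.isAlgebraic)] at hx
  obtain ⟨a, ha, b, hb, rfl⟩ := Algebra.exists_add_mul_of_mem_adjoin_insert hα hx
  exact ⟨a, IntermediateField.algebra_adjoin_le_adjoin F s ha, b,
    IntermediateField.algebra_adjoin_le_adjoin F s hb, rfl⟩

theorem Nat.not_isSquare_of_odd_factorization {m q : ℕ} (h : Odd (m.factorization q)) :
    ¬IsSquare m := by
  rintro ⟨r, rfl⟩
  rcases eq_or_ne r 0 with rfl | hr
  · simp at h
  · rw [Nat.factorization_mul hr hr, Finsupp.add_apply] at h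
    exact Nat.not_odd_iff_even.2 ⟨_, rfl⟩ h

theorem isIntegral_sqrt_natCast (n : ℕ) : IsIntegral ℚ √(n : ℝ) :=
  .of_pow two_pos <| by rw [sq_sqrt n.cast_nonneg]; exact isIntegral_algebraMap (x := (n : ℚ))

noncomputable def ratAdjoinSqrt (P : Finset ℕ) : IntermediateField ℚ ℝ :=
  IntermediateField.adjoin ℚ ((fun p : ℕ => √(p : ℝ)) '' P)

theorem sqrt_mem_ratAdjoinSqrt_of_mem {P : Finset ℕ} {p : ℕ} (hp : p ∈ P) :
    √(p : ℝ) ∈ ratAdjoinSqrt P :=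
  IntermediateField.subset_adjoin _ _ ⟨p, hp, rfl⟩

theorem sqrt_mem_ratAdjoinSqrt {P : Finset ℕ} {d : ℕ} (hd : Squarefree d)
    (hdP : d.primeFactors ⊆ P) : √(d : ℝ) ∈ ratAdjoinSqrt P := by
  rw [← Nat.prod_primeFactors_of_squarefree hd, Nat.cast_prod,
    sqrt_prod _ fun _ _ => Nat.cast_nonneg _]
  exact prod_mem fun p hp => sqrt_mem_ratAdjoinSqrt_of_mem (hdP hp)

theorem exists_add_mul_sqrt_of_mem_ratAdjoinSqrt_insert {P : Finset ℕ} {p : ℕ} {x : ℝ}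
    (hx : x ∈ ratAdjoinSqrt (insert p P)) :
    ∃ a ∈ ratAdjoinSqrt P, ∃ b ∈ ratAdjoinSqrt P, x = a + b * √(p : ℝ) := by
  rw [ratAdjoinSqrt, Finset.coe_insert, Set.image_insert_eq] at hx
  refine IntermediateField.exists_add_mul_of_mem_adjoin_insert ?_ ?_ hx
  · rintro _ ⟨q, -, rfl⟩
    exact isIntegral_sqrt_natCast q
  · rw [sq_sqrt p.cast_nonneg]
    exact natCast_mem _ p

theorem sqrt_notMem_ratAdjoinSqrt {P : Finset ℕ} (hP : ∀ p ∈ P, p.Prime) {q m : ℕ}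
    (hqP : q ∉ P) (hm : Odd (m.factorization q)) : √(m : ℝ) ∉ ratAdjoinSqrt P := by
  induction P using Finset.induction_on generalizing q m with
  | empty =>
    intro hmem
    rw [ratAdjoinSqrt, Finset.coe_empty, Set.image_empty, IntermediateField.adjoin_empty,
      IntermediateField.mem_bot] at hmem
    obtain ⟨r, hr⟩ := hmem
    exact irrational_sqrt_natCast_iff.2 (Nat.not_isSquare_of_odd_factorization hm) ⟨r, hr⟩
  | insert p P hpP ih =>
    intro hmem
    have hp := hP p (Finset.mem_insert_self p P)
    replace hP := fun r hr => hP r (Finset.mem_insert_of_mem hr)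
    obtain ⟨hqp, hqP⟩ := not_or.1 (Finset.mem_insert.not.1 hqP)
    obtain ⟨a, ha, b, hb, hab⟩ := exists_add_mul_sqrt_of_mem_ratAdjoinSqrt_insert hmem
    have hsqm := sq_sqrt (Nat.cast_nonneg (α := ℝ) m)
    have hsqp := sq_sqrt (Nat.cast_nonneg (α := ℝ) p)
    by_cases hb0 : b = 0
    · exact ih hP hqP hm (by rwa [hab, hb0, zero_mul, add_zero])
    by_cases ha0 : a = 0
    · have hm0 : m ≠ 0 := by rintro rfl; simp at hm
      refine ih hP hqP (m := m * p) ?_ ?_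
      · rwa [Nat.factorization_mul hm0 hp.ne_zero, Finsupp.add_apply, hp.factorization,
          Finsupp.single_eq_of_ne hqp, add_zero]
      · rw [Nat.cast_mul, sqrt_mul m.cast_nonneg,
          show √(m : ℝ) * √p = b * p by subst ha0; linear_combination √(p : ℝ) * hab + b * hsqp]
        exact mul_mem hb (natCast_mem _ p)
    · refine ih hP hpP (m := p) (by simp [hp.factorization_self]) ?_
      have hsqrt_p : √(p : ℝ) = (m - a ^ 2 - b ^ 2 * p) / (2 * a * b) := by
        rw [eq_div_iff (mul_ne_zero (mul_ne_zero two_ne_zero ha0) hb0)]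
        linear_combination (-(√(m : ℝ) + a + b * √(p : ℝ))) * hab + hsqm - b ^ 2 * hsqp
      rw [hsqrt_p]
      exact div_mem (sub_mem (sub_mem (natCast_mem _ m) (pow_mem ha 2))
        (mul_mem (pow_mem hb 2) (natCast_mem _ p))) (mul_mem (mul_mem (ofNat_mem _ 2) ha) hb)

theorem eq_zero_of_add_sqrt_mul_eq_zero {P : Finset ℕ} (hP : ∀ p ∈ P, p.Prime) {p : ℕ}
    (hp : p.Prime) (hpP : p ∉ P) {x y : ℝ} (hx : x ∈ ratAdjoinSqrt P) (hy : y ∈ ratAdjoinSqrt P)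
    (h : x + √(p : ℝ) * y = 0) : x = 0 ∧ y = 0 := by
  have hy0 : y = 0 := by
    by_contra hy0
    refine sqrt_notMem_ratAdjoinSqrt hP hpP (m := p) (by simp [hp.factorization_self]) ?_
    rw [show √(p : ℝ) = -x / y by rw [eq_div_iff hy0]; linarith]
    exact div_mem (neg_mem hx) hy
  exact ⟨by simpa [hy0] using h, hy0⟩

theorem sum_mul_sqrt_mem_ratAdjoinSqrt {ι : Type*} {P : Finset ℕ} {s : Finset ι} {f : ι → ℕ}
    (hsf : ∀ i ∈ s, Squarefree (f i)) (hfP : ∀ i ∈ s, (f i).primeFactors ⊆ P) (g : ι → ℚ) :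
    ∑ i ∈ s, (g i : ℝ) * √(f i : ℝ) ∈ ratAdjoinSqrt P :=
  sum_mem fun i hi =>
    mul_mem (SubfieldClass.ratCast_mem _ _) (sqrt_mem_ratAdjoinSqrt (hsf i hi) (hfP i hi))

theorem sum_mul_sqrt_eq_add_sqrt_mul {ι : Type*} (s : Finset ι) (f : ι → ℕ) (g : ι → ℝ) (p : ℕ) :
    ∑ i ∈ s, g i * √(f i : ℝ) = ∑ i ∈ s with ¬p ∣ f i, g i * √(f i : ℝ) +
      √(p : ℝ) * ∑ i ∈ s with p ∣ f i, g i * √((f i / p : ℕ) : ℝ) := by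
  rw [← Finset.sum_filter_not_add_sum_filter s (p ∣ f ·), Finset.mul_sum]
  congr 1
  refine Finset.sum_congr rfl fun i hi => ?_
  conv_lhs => rw [← Nat.mul_div_cancel' (Finset.mem_filter.1 hi).2]
  rw [Nat.cast_mul, sqrt_mul p.cast_nonneg]
  ring

theorem eq_zero_of_sum_mul_sqrt_eq_zero {ι : Type*} {P : Finset ℕ} (hP : ∀ p ∈ P, p.Prime)
    {s : Finset ι} {f : ι → ℕ} (hf : Set.InjOn f s) (hsf : ∀ i ∈ s, Squarefree (f i))
    (hfP : ∀ i ∈ s, (f i).primeFactors ⊆ P) {g : ι → ℚ}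
    (h : ∑ i ∈ s, (g i : ℝ) * √(f i : ℝ) = 0) : ∀ i ∈ s, g i = 0 := by
  induction P using Finset.induction_on generalizing s f with
  | empty =>
    have hf1 : ∀ i ∈ s, f i = 1 := fun i hi => by
      simpa [(hsf i hi).ne_zero] using hfP i hi
    intro i hi
    rw [Finset.sum_eq_single_of_mem i hi fun j hj hji =>
      (hji (hf hj hi ((hf1 j hj).trans (hf1 i hi).symm))).elim, hf1 i hi] at h
    simpa using h
  | insert p P hpP ih =>
    have hp := hP p (Finset.mem_insert_self p P)
    replace hP := fun r hr => hP r (Finset.mem_insert_of_mem hr)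
    have hfP_not_dvd : ∀ i ∈ {i ∈ s | ¬p ∣ f i}, (f i).primeFactors ⊆ P := by
      intro i hi
      rw [Finset.mem_filter] at hi
      refine (Finset.subset_insert_iff_of_notMem ?_).1 (hfP i hi.1)
      exact fun hpf => hi.2 (Nat.dvd_of_mem_primeFactors hpf)
    have hfP_dvd : ∀ i ∈ {i ∈ s | p ∣ f i}, (f i / p).primeFactors ⊆ P := by
      intro i hi
      rw [Finset.mem_filter] at hi
      rw [← Nat.gcd_eq_right hi.2, Nat.primeFactors_div_gcd (hsf i hi.1) hp.ne_zero,
        hp.primeFactors, sdiff_le_iff]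
      exact (hfP i hi.1).trans (Finset.insert_eq p P).le
    have hsf_dvd : ∀ i ∈ {i ∈ s | p ∣ f i}, Squarefree (f i / p) := fun i hi =>
      (hsf i (Finset.mem_filter.1 hi).1).squarefree_of_dvd
        (Nat.div_dvd_of_dvd (Finset.mem_filter.1 hi).2)
    have hsf_not_dvd : ∀ i ∈ {i ∈ s | ¬p ∣ f i}, Squarefree (f i) := fun i hi =>
      hsf i (Finset.mem_filter.1 hi).1
    rw [sum_mul_sqrt_eq_add_sqrt_mul s f (fun i => (g i : ℝ)) p] at h
    obtain ⟨hX, hY⟩ := eq_zero_of_add_sqrt_mul_eq_zero hP hp hpP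
      (sum_mul_sqrt_mem_ratAdjoinSqrt hsf_not_dvd hfP_not_dvd g)
      (sum_mul_sqrt_mem_ratAdjoinSqrt (f := (f · / p)) hsf_dvd hfP_dvd g) h
    intro i hi
    by_cases hpi : p ∣ f i
    · refine ih hP (f := (f · / p)) ?_ hsf_dvd hfP_dvd hY i (Finset.mem_filter.2 ⟨hi, hpi⟩)
      intro j hj k hk hjk
      rw [Finset.coe_filter] at hj hk
      exact hf hj.1 hk.1 ((Nat.div_left_inj hj.2 hk.2).1 hjk)
    · exact ih hP (hf.mono (Finset.coe_subset.2 (Finset.filter_subset _ _))) hsf_not_dvd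
        hfP_not_dvd hX i (Finset.mem_filter.2 ⟨hi, hpi⟩)

theorem linearIndependent_sqrt_squarefree :
    LinearIndependent ℚ (fun d : {d : ℕ // Squarefree d} => √(d : ℝ)) := by
  rw [linearIndependent_iff']
  intro s g hg
  refine eq_zero_of_sum_mul_sqrt_eq_zero (P := s.biUnion fun d => (d : ℕ).primeFactors) ?_
    Subtype.val_injective.injOn (fun d _ => d.2)
    (fun d hd _ hp => Finset.mem_biUnion.2 ⟨d, hd, hp⟩) ?_
  · simp only [Finset.mem_biUnion]
    rintro p ⟨d, -, hp⟩
    exact Nat.prime_of_mem_primeFactors hp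
  · simpa only [Rat.smul_def] using hg

theorem sum_int_mul_sqrt_add_rat_mul_sqrt_ne_zero {ι : Type*} [Fintype ι] {M : ι → ℕ}
    (hM : Function.Injective M) (hsf : ∀ k, Squarefree (M k)) {n : ι → ℤ}
    (hn : ∃ k ℓ, k ≠ ℓ ∧ n k ≠ 0 ∧ n ℓ ≠ 0) {m : ℕ} (hm : Squarefree m) (c : ℚ) :
    ∑ k, (n k : ℝ) * √(M k : ℝ) + c * √(m : ℝ) ≠ 0 := by
  intro h
  obtain ⟨j, hj, hjm⟩ : ∃ j, n j ≠ 0 ∧ M j ≠ m := by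
    obtain ⟨k, ℓ, hkℓ, hk, hℓ⟩ := hn
    by_cases hkm : M k = m
    · exact ⟨ℓ, hℓ, fun hℓm => hkℓ (hM (hkm.trans hℓm.symm))⟩
    · exact ⟨k, hk, hkm⟩
  let l : {d : ℕ // Squarefree d} →₀ ℚ :=
    ∑ k, Finsupp.single ⟨M k, hsf k⟩ (n k : ℚ) + Finsupp.single ⟨m, hm⟩ c
  have hl : l = 0 := linearIndependent_iff.1 linearIndependent_sqrt_squarefree l
    (by simpa [l, Finsupp.linearCombination_single, Rat.smul_def] using h)
  have := DFunLike.congr_fun hl ⟨M j, hsf j⟩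
  rw [Finsupp.add_apply, Finsupp.finsetSum_apply, Finset.sum_eq_single_of_mem j (Finset.mem_univ j)
    fun k _ hkj => Finsupp.single_eq_of_ne (by simpa [hM.eq_iff] using hkj.symm),
    Finsupp.single_eq_same, Finsupp.single_eq_of_ne (by simpa using hjm)] at this
  exact hj (by simpa using this)

theorem sum_int_mul_sqrt_squarefree_add_sqrt_ne_zero_general
    (b : ℕ) (M : Fin b → ℕ)
    (hsf : ∀ k, Squarefree (M k))
    (hmono : StrictMono M)
    (n : Fin b → ℤ)
    (h2 : ∃ k ℓ, k ≠ ℓ ∧ n k ≠ 0 ∧ n ℓ ≠ 0) :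
    ∀ N : ℕ,
      (∑ k, (n k : ℝ) * Real.sqrt (M k)) + Real.sqrt N ≠ 0 ∧
      (∑ k, (n k : ℝ) * Real.sqrt (M k)) - Real.sqrt N ≠ 0 := by
  intro N
  obtain ⟨m, g, rfl, hm⟩ := Nat.sq_mul_squarefree N
  have hsqrt : √((g ^ 2 * m : ℕ) : ℝ) = (g : ℚ) * √(m : ℝ) := by
    push_cast
    rw [sqrt_mul (by positivity), sqrt_sq (by positivity)]
  have hne := sum_int_mul_sqrt_add_rat_mul_sqrt_ne_zero hmono.injective hsf h2 hm
  rw [hsqrt, sub_eq_add_neg, ← neg_mul, ← Rat.cast_neg]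
  exact ⟨hne g, hne (-g)⟩

/-- If `ω k = √(M k)` with `M 1 < ... < M b` distinct square-free integers `> 1`,
and the integer vector `n` has two distinct nonzero components, then
`∑ n k * ω k ± √N ≠ 0` for every natural number `N`. -/
theorem sum_int_mul_sqrt_squarefree_add_sqrt_ne_zero
    (b : ℕ) (M : Fin b → ℕ)
    (hsf : ∀ k, Squarefree (M k))
    (hgt : ∀ k, 1 < M k)
    (hmono : StrictMono M)
    (n : Fin b → ℤ)
    (h2 : ∃ k ℓ, k ≠ ℓ ∧ n k ≠ 0 ∧ n ℓ ≠ 0) :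
    ∀ N : ℕ,
      (∑ k, (n k : ℝ) * Real.sqrt (M k)) + Real.sqrt N ≠ 0 ∧
      (∑ k, (n k : ℝ) * Real.sqrt (M k)) - Real.sqrt N ≠ 0 :=
  sum_int_mul_sqrt_squarefree_add_sqrt_ne_zero_general b M hsf hmono n h2
end

section
/- Let ω_k = √(M_k) where M_1 < ... < M_b are distinct square-free integers greater than 1, and let (n,j) ∈ ℤ^b × ℤ^d satisfy (n·ω)² = j² + 1 where j² = |j|² and n·ω = ∑ n_kω_k. Then n has at most one nonzero component, i.e. n = n_k e_k for some k and some n_k ∈ ℤ. -/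
/-!
Since `(n·ω)²` is a positive integer `c² s` with `s` squarefree, `n·ω = ±c √s`. Square roots of
distinct squarefree integers are linearly independent over `ℚ`, so `n k = 0` whenever `M k ≠ s`,
and by injectivity of `M` at most one `k` has `M k = s`.

Linear independence is proved by induction on a finite set `P` of primes. For `p ∉ P`, `√p` is not
in `F = ℚ(√q : q ∈ P)`, so `F(√p) = F ⊕ F √p`; a rational relation among the `√(∏ T)` with
`T ⊆ P ∪ {p}` then splits into two such relations with `T ⊆ P`.
-/

open Finset

namespace Subfield

variable {K : Type*} [Field K]

theorem eq_zero_of_add_mul_eq_zero {F : Subfield K} {r a b : K} (hr : r ∉ F) (ha : a ∈ F)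
    (hb : b ∈ F) (h : a + b * r = 0) : a = 0 ∧ b = 0 := by
  have hb0 : b = 0 := by
    by_contra hb0
    refine hr ?_
    have hr_eq : r = -a / b := by field_simp; linear_combination h
    exact hr_eq ▸ div_mem (neg_mem ha) hb
  exact ⟨by simpa [hb0] using h, hb0⟩

def adjoinSqrt (F : Subfield K) (r : K) (hr : r * r ∈ F) : Subfield K where
  carrier := {x | ∃ a ∈ F, ∃ b ∈ F, x = a + b * r}
  zero_mem' := ⟨0, F.zero_mem, 0, F.zero_mem, by ring⟩
  one_mem' := ⟨1, F.one_mem, 0, F.zero_mem, by ring⟩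
  add_mem' := by
    rintro _ _ ⟨a, ha, b, hb, rfl⟩ ⟨c, hc, d, hd, rfl⟩
    exact ⟨a + c, add_mem ha hc, b + d, add_mem hb hd, by ring⟩
  neg_mem' := by
    rintro _ ⟨a, ha, b, hb, rfl⟩
    exact ⟨-a, neg_mem ha, -b, neg_mem hb, by ring⟩
  mul_mem' := by
    rintro _ _ ⟨a, ha, b, hb, rfl⟩ ⟨c, hc, d, hd, rfl⟩
    exact ⟨a * c + b * d * (r * r), add_mem (mul_mem ha hc) (mul_mem (mul_mem hb hd) hr),
      a * d + b * c, add_mem (mul_mem ha hd) (mul_mem hb hc), by ring⟩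
  inv_mem' := by
    rintro _ ⟨a, ha, b, hb, rfl⟩
    by_cases hrF : r ∈ F
    · exact ⟨_, inv_mem (add_mem ha (mul_mem hb hrF)), 0, F.zero_mem, by ring⟩
    -- rationalise the denominator: `(a + b r)⁻¹ = (a - b r) / (a² - b² r²)`
    set D := a * a - b * b * (r * r)
    have hD : D ∈ F := sub_mem (mul_mem ha ha) (mul_mem (mul_mem hb hb) hr)
    refine ⟨a * D⁻¹, mul_mem ha (inv_mem hD), -b * D⁻¹, mul_mem (neg_mem hb) (inv_mem hD), ?_⟩
    by_cases hx : a + b * r = 0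
    · obtain ⟨rfl, rfl⟩ := eq_zero_of_add_mul_eq_zero hrF ha hb hx
      simp
    have hx' : a + -b * r ≠ 0 := fun h ↦ hx <| by
      obtain ⟨rfl, hb0⟩ := eq_zero_of_add_mul_eq_zero hrF ha (neg_mem hb) h
      simp [neg_eq_zero.mp hb0]
    have hD0 : D ≠ 0 := by
      have : D = (a + b * r) * (a + -b * r) := by ring
      exact this ▸ mul_ne_zero hx hx'
    field_simp
    ring

theorem mem_closure_insert_iff {S : Set K} {r x : K} (hr : r * r ∈ closure S) :
    x ∈ closure (insert r S) ↔ ∃ a ∈ closure S, ∃ b ∈ closure S, x = a + b * r := by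
  refine ⟨fun hx ↦ ?_, ?_⟩
  · refine (closure_le (t := (closure S).adjoinSqrt r hr)).mpr
      (Set.insert_subset ?_ fun y hy ↦ ?_) hx
    · exact ⟨0, zero_mem _, 1, one_mem _, by ring⟩
    · exact ⟨y, subset_closure hy, 0, zero_mem _, by ring⟩
  · rintro ⟨a, ha, b, hb, rfl⟩
    have hle : closure S ≤ closure (insert r S) := closure_mono (Set.subset_insert r S)
    exact add_mem (hle ha) (mul_mem (hle hb) (subset_closure (Set.mem_insert r S)))

theorem mem_or_exists_eq_mul_of_mul_self_mem [NeZero (2 : K)] {S : Set K} {r y : K}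
    (hr : r ∉ closure S) (hr2 : r * r ∈ closure S) (hy : y ∈ closure (insert r S))
    (hy2 : y * y ∈ closure S) : y ∈ closure S ∨ ∃ b ∈ closure S, y = b * r := by
  obtain ⟨a, ha, b, hb, rfl⟩ := (mem_closure_insert_iff hr2).mp hy
  have hsq : (a * a + b * b * (r * r) - (a + b * r) * (a + b * r)) + (2 * a * b) * r = 0 := by
    ring
  have hab := (eq_zero_of_add_mul_eq_zero hr (sub_mem (add_mem (mul_mem ha ha)
    (mul_mem (mul_mem hb hb) hr2)) hy2) (mul_mem (mul_mem (ofNat_mem _ 2) ha) hb) hsq).2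
  rcases mul_eq_zero.mp hab with h | rfl
  · obtain rfl := (mul_eq_zero.mp h).resolve_left two_ne_zero
    exact .inr ⟨b, hb, by ring⟩
  · exact .inl (by simpa using ha)

end Subfield

-- `ℚ(√p : p ∈ P)`
noncomputable def sqrtField (P : Finset ℕ) : Subfield ℝ :=
  Subfield.closure ((fun p : ℕ ↦ √(p : ℝ)) '' P)

theorem sqrtField_insert (p : ℕ) (P : Finset ℕ) :
    sqrtField (insert p P) = Subfield.closure (insert √(p : ℝ) ((fun p : ℕ ↦ √(p : ℝ)) '' P)) := by
  rw [sqrtField, coe_insert, Set.image_insert_eq]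

theorem sqrt_prod_mem_sqrtField {P T : Finset ℕ} (hTP : T ⊆ P) :
    √(∏ p ∈ T, (p : ℝ)) ∈ sqrtField P := by
  rw [Real.sqrt_prod _ fun p _ ↦ Nat.cast_nonneg p]
  exact prod_mem fun p hp ↦ Subfield.subset_closure (Set.mem_image_of_mem _ (hTP hp))

theorem eq_empty_of_sqrt_prod_mem_sqrtField_empty {T : Finset ℕ} (hT : ∀ p ∈ T, p.Prime)
    (h : √(∏ p ∈ T, (p : ℝ)) ∈ sqrtField ∅) : T = ∅ := by
  have hsf : Squarefree (∏ p ∈ T, p) :=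
    Finset.squarefree_prod_of_pairwise_isCoprime
      (fun p hp q hq hpq ↦ Nat.coprime_iff_isRelPrime.mp
        ((Nat.coprime_primes (hT p hp) (hT q hq)).mpr hpq))
      fun p hp ↦ (hT p hp).squarefree
  have hrat : ¬Irrational √((∏ p ∈ T, p : ℕ) : ℝ) := by
    have hle : sqrtField ∅ ≤ (Rat.castHom ℝ).fieldRange :=
      Subfield.closure_le.mpr (by simp)
    obtain ⟨q, hq⟩ := hle h
    exact fun hirr ↦ hirr ⟨q, by push_cast; exact hq⟩
  obtain ⟨k, hk⟩ := not_not.mp (irrational_sqrt_natCast_iff.not.mp hrat)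
  have hk1 : k = 1 := Nat.isUnit_iff.mp (hsf k ⟨1, by rw [hk, mul_one]⟩)
  rw [← Nat.primeFactors_prod hT, hk, hk1, mul_one, Nat.primeFactors_one]

theorem subset_of_sqrt_prod_mem_sqrtField {P T : Finset ℕ} (hP : ∀ p ∈ P, p.Prime)
    (hT : ∀ p ∈ T, p.Prime) (h : √(∏ p ∈ T, (p : ℝ)) ∈ sqrtField P) : T ⊆ P := by
  induction P using Finset.induction_on generalizing T with
  | empty => exact (eq_empty_of_sqrt_prod_mem_sqrtField_empty hT h).subset
  | insert p P hpP ih =>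
    have hP' : ∀ q ∈ P, q.Prime := fun q hq ↦ hP q (mem_insert_of_mem hq)
    have hp := hP p (mem_insert_self p P)
    have hsqrt_p : √(p : ℝ) ∉ sqrtField P := fun h ↦
      hpP (singleton_subset_iff.mp (ih hP' (by simpa using hp) (by simpa using h)))
    have hpp : √(p : ℝ) * √(p : ℝ) ∈ sqrtField P := by
      rw [Real.mul_self_sqrt (Nat.cast_nonneg p)]
      exact natCast_mem _ p
    have hTT : √(∏ p ∈ T, (p : ℝ)) * √(∏ p ∈ T, (p : ℝ)) ∈ sqrtField P := by
      rw [Real.mul_self_sqrt (prod_nonneg fun p _ ↦ Nat.cast_nonneg p)]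
      exact prod_mem fun q _ ↦ natCast_mem _ q
    rw [sqrtField_insert] at h
    rcases Subfield.mem_or_exists_eq_mul_of_mul_self_mem hsqrt_p hpp h hTT with hTP | ⟨b, hb, hbT⟩
    · exact (ih hP' hT hTP).trans (subset_insert p P)
    -- `√(∏ T) = b √p`, so `√(p ∏ T) = b p` already lies in `ℚ(√q : q ∈ P)`
    have hpT_mem : √((p : ℝ) * ∏ p ∈ T, (p : ℝ)) ∈ sqrtField P := by
      rw [Real.sqrt_mul (Nat.cast_nonneg p), hbT, mul_left_comm]
      exact mul_mem hb hpp
    by_cases hpT : p ∈ T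
    · rw [← mul_prod_erase T _ hpT, ← mul_assoc, Real.sqrt_mul (by positivity),
        Real.sqrt_mul_self (Nat.cast_nonneg p)] at hpT_mem
      have hp0 : (p : ℝ) ≠ 0 := Nat.cast_ne_zero.mpr hp.ne_zero
      have herase := ih hP' (fun q hq ↦ hT q (mem_of_mem_erase hq))
        (by simpa [hp0] using mul_mem (inv_mem (natCast_mem _ p)) hpT_mem)
      exact subset_insert_iff.mpr herase
    · rw [← prod_insert hpT] at hpT_mem
      have hins := ih hP' (fun q hq ↦ (mem_insert.mp hq).elim (· ▸ hp) (hT q)) hpT_mem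
      exact absurd (hins (mem_insert_self p T)) hpP

theorem sqrt_notMem_sqrtField {P : Finset ℕ} (hP : ∀ p ∈ P, p.Prime) {p : ℕ} (hp : p.Prime)
    (hpP : p ∉ P) : √(p : ℝ) ∉ sqrtField P := fun h ↦
  hpP <| singleton_subset_iff.mp <|
    subset_of_sqrt_prod_mem_sqrtField hP (by simpa using hp) (by simpa using h)

theorem linearIndepOn_sqrt_prod_powerset {P : Finset ℕ} (hP : ∀ p ∈ P, p.Prime) :
    LinearIndepOn ℚ (fun T : Finset ℕ ↦ √(∏ p ∈ T, (p : ℝ))) (P.powerset : Set (Finset ℕ)) := by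
  induction P using Finset.induction_on with
  | empty => simp
  | insert p P hpP ih =>
    have hp := hP p (mem_insert_self p P)
    have hind := linearIndepOn_finset_iff.mp (ih fun q hq ↦ hP q (mem_insert_of_mem hq))
    rw [linearIndepOn_finset_iff]
    intro c hc
    set v := fun T : Finset ℕ ↦ √(∏ p ∈ T, (p : ℝ))
    set A := ∑ T ∈ P.powerset, c T • v T
    set B := ∑ T ∈ P.powerset, c (insert p T) • v T
    have hsplit : A + B * √(p : ℝ) = 0 := by
      rw [← hc, sum_powerset_insert hpP, sum_mul]
      refine congrArg (A + ·) (sum_congr rfl fun T hT ↦ ?_)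
      have hpT : p ∉ T := fun h ↦ hpP (mem_powerset.mp hT h)
      simp only [v]
      rw [smul_mul_assoc, prod_insert hpT, Real.sqrt_mul (Nat.cast_nonneg _), mul_comm √(p : ℝ)]
    have hmem : ∀ c : Finset ℕ → ℚ, ∑ T ∈ P.powerset, c T • v T ∈ sqrtField P := fun c ↦
      sum_mem fun T hT ↦ SubfieldClass.qsmul_mem _ _ (sqrt_prod_mem_sqrtField (mem_powerset.mp hT))
    have hsqrt_p := sqrt_notMem_sqrtField (fun q hq ↦ hP q (mem_insert_of_mem hq)) hp hpP
    obtain ⟨hA, hB⟩ := Subfield.eq_zero_of_add_mul_eq_zero hsqrt_p (hmem c) (hmem _) hsplit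
    intro T hT
    rw [mem_powerset, subset_insert_iff] at hT
    by_cases hpT : p ∈ T
    · rw [← insert_erase hpT]
      exact hind _ hB _ (mem_powerset.mpr hT)
    · rw [erase_eq_of_notMem hpT] at hT
      exact hind c hA T (mem_powerset.mpr hT)

theorem linearIndepOn_sqrt_prod :
    LinearIndepOn ℚ (fun T : Finset ℕ ↦ √(∏ p ∈ T, (p : ℝ))) {T | ∀ p ∈ T, p.Prime} := by
  refine linearIndepOn_of_finite _ fun t ht htfin ↦ ?_
  have hP : ∀ p ∈ htfin.toFinset.sup id, p.Prime := fun p hp ↦ by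
    obtain ⟨T, hT, hpT⟩ := mem_sup.mp hp
    exact ht (htfin.mem_toFinset.mp hT) p hpT
  refine (linearIndepOn_sqrt_prod_powerset hP).mono fun T hT ↦ ?_
  exact mem_powerset.mpr (le_sup (f := id) (htfin.mem_toFinset.mpr hT))

theorem linearIndepOn_sqrt_squarefree :
    LinearIndepOn ℚ (fun m : ℕ ↦ √(m : ℝ)) {m | Squarefree m} := by
  have h := LinearIndepOn.image_of_comp (fun T ↦ ∏ p ∈ T, p) (fun m : ℕ ↦ √(m : ℝ))
    (by simpa only [Function.comp_def, Nat.cast_prod] using linearIndepOn_sqrt_prod)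
  exact h.mono fun m hm ↦ ⟨m.primeFactors, fun p hp ↦ Nat.prime_of_mem_primeFactors hp,
    Nat.prod_primeFactors_of_squarefree hm⟩

theorem eq_zero_of_sum_mul_sqrt_eq_mul_sqrt {ι : Type*} [Fintype ι] {M : ι → ℕ}
    (hM : Function.Injective M) (hMsf : ∀ k, Squarefree (M k)) {s : ℕ} (hs : Squarefree s)
    (n : ι → ℚ) (e : ℚ) (h : ∑ k, (n k : ℝ) * √(M k : ℝ) = e * √(s : ℝ)) {k : ι}
    (hk : M k ≠ s) : n k = 0 := by
  classical
  set l : ℕ →₀ ℚ := ∑ i, Finsupp.single (M i) (n i) - Finsupp.single s e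
  have hl : l ∈ Finsupp.supported ℚ ℚ {m | Squarefree m} :=
    sub_mem (sum_mem fun i _ ↦ Finsupp.single_mem_supported ℚ _ (hMsf i))
      (Finsupp.single_mem_supported ℚ _ hs)
  have hcomb : Finsupp.linearCombination ℚ (fun m : ℕ ↦ √(m : ℝ)) l = 0 := by
    simp [l, Finsupp.linearCombination_single, Rat.smul_def, h]
  have hl0 : l = 0 := linearIndepOn_iff.mp linearIndepOn_sqrt_squarefree l hl hcomb
  simpa [l, Finsupp.single_apply, hM.eq_iff, hk.symm] using DFunLike.congr_fun hl0 (M k)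

theorem Real.exists_eq_intCast_mul_sqrt_of_sq_eq_natCast {x : ℝ} {N : ℕ} (h : x ^ 2 = N) :
    ∃ e : ℤ, ∃ s : ℕ, Squarefree s ∧ x = e * √(s : ℝ) := by
  obtain ⟨s, c, rfl, hs⟩ := Nat.sq_mul_squarefree N
  have hx : x ^ 2 = (c * √(s : ℝ)) ^ 2 := by
    rw [h, mul_pow, Real.sq_sqrt (Nat.cast_nonneg s)]
    push_cast
    ring
  rcases sq_eq_sq_iff_eq_or_eq_neg.mp hx with hx | hx
  · exact ⟨c, s, hs, by simpa using hx⟩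
  · exact ⟨-c, s, hs, by push_cast; linarith⟩

theorem characteristics_singleton_general
    (b d : ℕ) (M : Fin b → ℕ)
    (hsf : ∀ k, Squarefree (M k))
    (hmono : StrictMono M)
    (n : Fin b → ℤ) (j : Fin d → ℤ)
    (hchar : (∑ k, (n k : ℝ) * Real.sqrt (M k)) ^ 2 = (∑ i, (j i : ℝ) ^ 2) + 1) :
    ∀ k ℓ, n k ≠ 0 → n ℓ ≠ 0 → k = ℓ := by
  intro k ℓ hk hℓ
  have hN : (∑ k, (n k : ℝ) * √(M k : ℝ)) ^ 2 = ((∑ i, (j i).natAbs ^ 2 + 1 : ℕ) : ℝ) := by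
    rw [hchar]
    push_cast [Nat.cast_natAbs, sq_abs]
    rfl
  obtain ⟨e, s, hs, hT⟩ := Real.exists_eq_intCast_mul_sqrt_of_sq_eq_natCast hN
  have hvanish : ∀ i, M i ≠ s → n i = 0 := fun i hi ↦ by
    exact_mod_cast eq_zero_of_sum_mul_sqrt_eq_mul_sqrt hmono.injective hsf hs (fun i ↦ (n i : ℚ))
      e (by push_cast; exact hT) hi
  by_contra hkℓ
  rcases ne_or_eq (M k) s with h | h
  · exact hk (hvanish k h)
  · exact hℓ (hvanish ℓ fun h' ↦ hkℓ (hmono.injective (h.trans h'.symm)))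

/-- If `ω k = √(M k)` with `M 1 < ... < M b` distinct square-free integers `> 1`,
and `(n, j) ∈ ℤ^b × ℤ^d` lies on the characteristics, i.e. `(n·ω)² = j² + 1`,
then `n` has at most one nonzero component. -/
theorem characteristics_singleton
    (b d : ℕ) (M : Fin b → ℕ)
    (hsf : ∀ k, Squarefree (M k))
    (hgt : ∀ k, 1 < M k)
    (hmono : StrictMono M)
    (n : Fin b → ℤ) (j : Fin d → ℤ)
    (hchar : (∑ k, (n k : ℝ) * Real.sqrt (M k)) ^ 2 = (∑ i, (j i : ℝ) ^ 2) + 1) :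
    ∀ k ℓ, n k ≠ 0 → n ℓ ≠ 0 → k = ℓ :=
  characteristics_singleton_general b d M hsf hmono n j hchar
end

section
/- For every b ≥ 1 and d ≥ 1 there exist infinitely many tuples (j_1, ..., j_b) ∈ (ℤ^d)^b such that the integers j_1² + 1 < j_2² + 1 < ... < j_b² + 1 are distinct and all square-free. -/
/-!
If `n ^ 2 + 1` is not square-free, then `p ^ 2 ∣ n ^ 2 + 1` for a prime `p ≤ n` with
`p ≡ 1 (mod 4)`. For odd `p`, the congruence `x ^ 2 ≡ -1 (mod p ^ 2)` has at most two solutions,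
so at most `2 (N / p ^ 2 + 1)` of the `n < N` are killed by `p`. Summing over `p = 4k + 5` with
`∑ 1 / (4k + 5) ^ 2 ≤ 1 / 12` leaves at least `N / 3` square-free values of `n ^ 2 + 1` with
`n < N`, so there are infinitely many. The tuples are consecutive blocks of `b` such `n`,
placed on the first coordinate.
-/

open Finset

theorem Prime.pow_dvd_sub_or_pow_dvd_add_of_pow_dvd_sq_sub_sq {R : Type*} [CommRing R] [IsDomain R]
    {p x y : R} (hp : Prime p) (hp2 : ¬p ∣ 2) (hy : ¬p ∣ y) {n : ℕ} (h : p ^ n ∣ x ^ 2 - y ^ 2) :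
    p ^ n ∣ x - y ∨ p ^ n ∣ x + y := by
  have hnot : ¬(p ∣ x - y ∧ p ∣ x + y) := by
    rintro ⟨hsub, hadd⟩
    have h2y : p ∣ 2 * y := by
      simpa only [show x + y - (x - y) = 2 * y by ring] using dvd_sub hadd hsub
    exact (hp.dvd_or_dvd h2y).elim hp2 hy
  rw [sq_sub_sq] at h
  by_cases hsub : p ∣ x - y
  · exact .inl (hp.pow_dvd_of_dvd_mul_left n (fun hadd => hnot ⟨hsub, hadd⟩) h)
  · exact .inr (hp.pow_dvd_of_dvd_mul_right n hsub h)

namespace Nat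

theorem card_filter_natCast_eq_le (N : ℕ) {r : ℕ} [NeZero r] (a : ZMod r) :
    #{n ∈ range N | ((n : ℕ) : ZMod r) = a} ≤ N / r + 1 := by
  obtain ⟨v, rfl⟩ : ∃ v : ℕ, (v : ZMod r) = a := ⟨a.val, ZMod.natCast_zmod_val a⟩
  simp_rw [ZMod.natCast_eq_natCast_iff]
  rw [← count_eq_card_filter_range, count_modEq_card _ (pos_of_neZero r)]
  split_ifs <;> omega

theorem not_four_dvd_sq_add_one (n : ℕ) : ¬4 ∣ n ^ 2 + 1 := by
  rw [← ZMod.natCast_eq_zero_iff]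
  push_cast
  generalize (n : ZMod 4) = x
  revert x
  decide

theorem Prime.not_dvd_of_dvd_sq_add_one {p n : ℕ} (hp : p.Prime) (h : p ∣ n ^ 2 + 1) : ¬p ∣ n :=
  fun hn => hp.not_dvd_one ((Nat.dvd_add_right (dvd_pow hn two_ne_zero)).1 h)

theorem Prime.mod_four_ne_three_of_dvd_sq_add_one {p n : ℕ} (hp : p.Prime) (h : p ∣ n ^ 2 + 1) :
    p % 4 ≠ 3 := by
  have := Fact.mk hp
  rw [← ZMod.natCast_eq_zero_iff] at h
  push_cast at h
  exact ZMod.mod_four_ne_three_of_sq_eq_neg_one (eq_neg_of_add_eq_zero_left h)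

theorem Prime.mod_four_eq_one_of_sq_dvd_sq_add_one {p n : ℕ} (hp : p.Prime)
    (h : p ^ 2 ∣ n ^ 2 + 1) : p % 4 = 1 := by
  have hp2 : p ≠ 2 := by
    rintro rfl
    exact not_four_dvd_sq_add_one n h
  have h3 := hp.mod_four_ne_three_of_dvd_sq_add_one ((dvd_pow_self p two_ne_zero).trans h)
  have hodd := Nat.odd_iff.1 (hp.odd_of_ne_two hp2)
  omega

theorem sum_inv_sq_four_mul_add_five_le (K : ℕ) :
    ∑ k ∈ range K, (1 : ℚ) / (4 * k + 5) ^ 2 ≤ 1 / 12 := by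
  -- `1 / (4k + 5) ^ 2 ≤ 1 / ((4k + 3) (4k + 7))`, which telescopes
  set g : ℕ → ℚ := fun k => 1 / (16 * k + 12)
  have hstep (k : ℕ) : (1 : ℚ) / (4 * k + 5) ^ 2 ≤ g k - g (k + 1) := by
    simp only [g]
    push_cast
    rw [div_sub_div _ _ (by positivity) (by positivity),
      div_le_div_iff₀ (by positivity) (by positivity)]
    nlinarith
  calc ∑ k ∈ range K, (1 : ℚ) / (4 * k + 5) ^ 2
      ≤ ∑ k ∈ range K, (g k - g (k + 1)) := sum_le_sum fun k _ => hstep k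
    _ = g 0 - g K := sum_range_sub' g K
    _ ≤ 1 / 12 := by norm_num [g]; positivity

theorem card_filter_sq_dvd_sq_add_one_le {p : ℕ} (hp : p.Prime) (hp2 : p ≠ 2) (N : ℕ) :
    #{n ∈ range N | p ^ 2 ∣ n ^ 2 + 1} ≤ 2 * (N / p ^ 2 + 1) := by
  rcases eq_empty_or_nonempty {n ∈ range N | p ^ 2 ∣ n ^ 2 + 1} with hempty | ⟨n₀, hn₀⟩
  · simp [hempty]
  have : NeZero p := ⟨hp.ne_zero⟩
  have hn₀ : p ^ 2 ∣ n₀ ^ 2 + 1 := (mem_filter.1 hn₀).2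
  have hpZ : _root_.Prime (p : ℤ) := prime_iff_prime_int.1 hp
  have hp2Z : ¬(p : ℤ) ∣ 2 := by
    exact_mod_cast fun h => hp2 ((prime_dvd_prime_iff_eq hp prime_two).1 h)
  have hn₀Z : ¬(p : ℤ) ∣ n₀ := by
    exact_mod_cast hp.not_dvd_of_dvd_sq_add_one ((dvd_pow_self p two_ne_zero).trans hn₀)
  have hsub : {n ∈ range N | p ^ 2 ∣ n ^ 2 + 1} ⊆
      {n ∈ range N | ((n : ℕ) : ZMod (p ^ 2)) = n₀} ∪
        {n ∈ range N | ((n : ℕ) : ZMod (p ^ 2)) = -n₀} := by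
    intro n hn
    obtain ⟨hnN, hn⟩ := mem_filter.1 hn
    have hdiff : (p : ℤ) ^ 2 ∣ (n : ℤ) ^ 2 - (n₀ : ℤ) ^ 2 := by
      have hnSq : (p : ℤ) ^ 2 ∣ (n : ℤ) ^ 2 + 1 := by exact_mod_cast hn
      have hn₀Sq : (p : ℤ) ^ 2 ∣ (n₀ : ℤ) ^ 2 + 1 := by exact_mod_cast hn₀
      simpa using _root_.dvd_sub hnSq hn₀Sq
    rcases hpZ.pow_dvd_sub_or_pow_dvd_add_of_pow_dvd_sq_sub_sq hp2Z hn₀Z hdiff with h | h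
    · refine mem_union_left _ (mem_filter.2 ⟨hnN, ?_⟩)
      rw [← sub_eq_zero]
      exact_mod_cast (ZMod.intCast_zmod_eq_zero_iff_dvd _ (p ^ 2)).2 (by exact_mod_cast h)
    · refine mem_union_right _ (mem_filter.2 ⟨hnN, ?_⟩)
      rw [eq_neg_iff_add_eq_zero]
      exact_mod_cast (ZMod.natCast_eq_zero_iff (n + n₀) (p ^ 2)).2 (by exact_mod_cast h)
  calc #{n ∈ range N | p ^ 2 ∣ n ^ 2 + 1}
      ≤ #{n ∈ range N | ((n : ℕ) : ZMod (p ^ 2)) = n₀} +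
          #{n ∈ range N | ((n : ℕ) : ZMod (p ^ 2)) = -n₀} :=
        (card_le_card hsub).trans (card_union_le _ _)
    _ ≤ 2 * (N / p ^ 2 + 1) := by
        linarith [card_filter_natCast_eq_le N (n₀ : ZMod (p ^ 2)),
          card_filter_natCast_eq_le N (-n₀ : ZMod (p ^ 2))]

theorem exists_prime_sq_dvd_sq_add_one_of_not_squarefree {n : ℕ} (h : ¬Squarefree (n ^ 2 + 1)) :
    ∃ p, p.Prime ∧ p % 4 = 1 ∧ p ≤ n ∧ p ^ 2 ∣ n ^ 2 + 1 := by
  simp only [squarefree_iff_prime_squarefree, not_forall, not_not, ← sq] at h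
  obtain ⟨p, hp, hdvd⟩ := h
  refine ⟨p, hp, hp.mod_four_eq_one_of_sq_dvd_sq_add_one hdvd, ?_, hdvd⟩
  have := le_of_dvd (succ_pos _) hdvd
  have := hp.two_le
  nlinarith

theorem sum_filter_prime_mod_four_eq_one_le (N : ℕ) {f : ℕ → ℚ} (hf : 0 ≤ f) :
    ∑ p ∈ range N with p.Prime ∧ p % 4 = 1, f p ≤ ∑ k ∈ range (N / 4), f (4 * k + 5) := by
  have hsub : {p ∈ range N | p.Prime ∧ p % 4 = 1} ⊆ (range (N / 4)).image (fun k => 4 * k + 5) := by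
    intro p hp
    simp only [mem_filter, mem_range] at hp
    obtain ⟨hpN, hp, hp4⟩ := hp
    have := hp.two_le
    exact mem_image.2 ⟨(p - 5) / 4, mem_range.2 (by omega), by omega⟩
  calc ∑ p ∈ range N with p.Prime ∧ p % 4 = 1, f p
      ≤ ∑ p ∈ (range (N / 4)).image (fun k => 4 * k + 5), f p :=
        sum_le_sum_of_subset_of_nonneg hsub fun p _ _ => hf p
    _ = ∑ k ∈ range (N / 4), f (4 * k + 5) :=
        sum_image fun a _ b _ hab => by simpa using hab

theorem card_filter_not_squarefree_sq_add_one_le (N : ℕ) :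
    (#{n ∈ range N | ¬Squarefree (n ^ 2 + 1)} : ℚ) ≤ 2 * N / 3 := by
  have hcover : {n ∈ range N | ¬Squarefree (n ^ 2 + 1)} ⊆
      {p ∈ range N | p.Prime ∧ p % 4 = 1}.biUnion fun p => {n ∈ range N | p ^ 2 ∣ n ^ 2 + 1} := by
    intro n hn
    obtain ⟨hnN, hn⟩ := mem_filter.1 hn
    obtain ⟨p, hp, hp4, hpn, hdvd⟩ := exists_prime_sq_dvd_sq_add_one_of_not_squarefree hn
    refine mem_biUnion.2 ⟨p, mem_filter.2 ⟨?_, hp, hp4⟩, mem_filter.2 ⟨hnN, hdvd⟩⟩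
    exact mem_range.2 (hpn.trans_lt (mem_range.1 hnN))
  have hcard : #{n ∈ range N | ¬Squarefree (n ^ 2 + 1)} ≤
      ∑ p ∈ range N with p.Prime ∧ p % 4 = 1, 2 * (N / p ^ 2 + 1) := by
    refine (card_le_card hcover).trans (card_biUnion_le.trans (sum_le_sum fun p hp => ?_))
    obtain ⟨-, hp, hp4⟩ := mem_filter.1 hp
    exact card_filter_sq_dvd_sq_add_one_le hp (by omega) N
  calc (#{n ∈ range N | ¬Squarefree (n ^ 2 + 1)} : ℚ)
      ≤ ∑ p ∈ range N with p.Prime ∧ p % 4 = 1, ((2 * (N / p ^ 2 + 1) : ℕ) : ℚ) := by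
        exact_mod_cast hcard
    _ ≤ ∑ p ∈ range N with p.Prime ∧ p % 4 = 1, 2 * ((N : ℚ) / (p : ℚ) ^ 2 + 1) := by
        refine sum_le_sum fun p _ => ?_
        push_cast
        gcongr
        exact_mod_cast cast_div_le
    _ ≤ ∑ k ∈ range (N / 4), 2 * ((N : ℚ) / ((4 * k + 5 : ℕ) : ℚ) ^ 2 + 1) :=
        sum_filter_prime_mod_four_eq_one_le N fun p => by positivity
    _ = 2 * N * ∑ k ∈ range (N / 4), (1 : ℚ) / (4 * k + 5) ^ 2 + 2 * ((N / 4 : ℕ) : ℚ) := by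
        rw [mul_sum]
        simp only [mul_add, sum_add_distrib, sum_const, card_range, nsmul_eq_mul]
        push_cast
        ring_nf
    _ ≤ 2 * N * (1 / 12) + 2 * (N / 4) := by
        gcongr
        · exact sum_inv_sq_four_mul_add_five_le _
        · exact cast_div_le
    _ = 2 * N / 3 := by ring

theorem infinite_setOf_squarefree_sq_add_one : {n : ℕ | Squarefree (n ^ 2 + 1)}.Infinite := by
  refine Set.infinite_of_forall_exists_gt fun M => ?_
  by_contra! hbound
  have hgood : #{n ∈ range (3 * M + 6) | Squarefree (n ^ 2 + 1)} ≤ M + 1 := by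
    simpa using card_le_card (t := range (M + 1))
      fun n hn => mem_range.2 (lt_succ_of_le (hbound n (mem_filter.1 hn).2))
  have hsplit := card_filter_add_card_filter_not (s := range (3 * M + 6))
    fun n => Squarefree (n ^ 2 + 1)
  have hbad := card_filter_not_squarefree_sq_add_one_le (3 * M + 6)
  rw [card_range] at hsplit
  qify at hgood hsplit hbad
  linarith

end Nat

theorem sum_pi_single_sq {ι R : Type*} [Fintype ι] [DecidableEq ι] [Semiring R] (i : ι) (x : R) :
    ∑ j, Pi.single i x j ^ 2 = x ^ 2 := by
  rw [Fintype.sum_eq_single i fun j hj => by simp [hj]]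
  simp

/-- For every `b ≥ 1` and `d ≥ 1` there are infinitely many tuples
`(j 1, ..., j b) ∈ (ℤ^d)^b` such that the integers `j k ^ 2 + 1` are strictly
increasing (hence distinct) and all square-free. -/
theorem infinitely_many_squarefree_tuples
    (b d : ℕ) (hb : 1 ≤ b) (hd : 1 ≤ d) :
    {j : Fin b → Fin d → ℤ |
        StrictMono (fun k => ∑ i, (j k i) ^ 2) ∧
        ∀ k, Squarefree ((∑ i, (j k i) ^ 2) + 1)}.Infinite := by
  have hs := Nat.infinite_setOf_squarefree_sq_add_one
  set a := Nat.nth fun n => Squarefree (n ^ 2 + 1)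
  let tuple (m : ℕ) : Fin b → Fin d → ℤ := fun k => Pi.single ⟨0, hd⟩ (a (m * b + k) : ℤ)
  have hnorm (m : ℕ) (k : Fin b) : ∑ i, tuple m k i ^ 2 = ((a (m * b + k) ^ 2 : ℕ) : ℤ) := by
    push_cast
    exact sum_pi_single_sq _ _
  refine Set.infinite_of_injective_forall_mem (f := tuple) (fun m m' h => ?_) fun m => ⟨?_, ?_⟩
  · have h0 := congrFun (congrFun h ⟨0, hb⟩) ⟨0, hd⟩
    simp only [tuple, Pi.single_eq_same, Nat.cast_inj, add_zero] at h0
    exact Nat.eq_of_mul_eq_mul_right hb ((Nat.nth_strictMono hs).injective h0)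
  · intro k l hkl
    simp only [hnorm, Nat.cast_lt]
    gcongr
    exact Nat.nth_strictMono hs (by simpa using hkl)
  · intro k
    rw [hnorm]
    exact_mod_cast Int.squarefree_natCast.2 (Nat.nth_mem_of_infinite hs _)
end

section
/- Suppose ω^{(0)} ∈ ℝ^b is Diophantine: ‖n·ω^{(0)}‖_𝕋 ≥ 2ξ/|n|^γ for all nonzero n ∈ ℤ^b, where ξ > 0 and γ > 2b. Fix p ≥ 1 and δ > 0, and set ω = ω^{(0)} + δ^p ω′ with ω′ ranging over the unit ball of ℝ^b. Then for δ sufficiently small, the set of ω′ in the unit ball for which there exists a nonzero n ∈ ℤ^b with ‖n·ω‖_𝕋 < ξ/|n|^{3γ} has Lebesgue measure at most Cδ^p, where C depends only on ξ, γ and b. -/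
/-!
Put `η = δ ^ p` and, for `n ≠ 0`, let `R n` be the set of `ω'` in the cube `[-1, 1]^b` with
`‖n·(ω₀ + η ω')‖_𝕋 < ξ / |n|^(3γ)`. Since `|η n·ω'| ≤ b η |n|`, the Diophantine property of `ω₀`
makes `R n` empty unless `ξ ≤ b η |n|^(γ+1)`. In that case pick `i` with `|n i| = |n|`: the
condition on `ω'` says that `n·ω₀ + η n·ω'` lies in `O(b η |n| + 1)` intervals of length
`2ξ / |n|^(3γ)` around integers, and a linear change of variables in the `i`-th coordinate bounds the measure of
`R n` by `(η |n|)⁻¹ 2^(b-1)` times their total length. Using `ξ ≤ b η |n|^(γ+1)` once or twice,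
this is `O(η |n|^(1-γ))`, which is summable over `ℤ^b` because `γ - 1 > b`. No smallness of `δ`
is needed.
-/

open MeasureTheory

noncomputable def distToInt (x : ℝ) : ℝ := |x - round x|

open Finset Module

lemma distToInt_le_add_abs_sub (x y : ℝ) : distToInt x ≤ distToInt y + |x - y| :=
  calc distToInt x ≤ |x - round y| := round_le x (round y)
    _ ≤ |x - y| + |y - round y| := abs_sub_le x y _
    _ = distToInt y + |x - y| := add_comm _ _

lemma volume_setOf_abs_sub_le_distToInt_lt_le (c : ℝ) {r ε : ℝ} (hr : 0 ≤ r) (hε : 0 < ε) :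
    volume {x : ℝ | |x - c| ≤ r ∧ distToInt x < ε} ≤
      ENNReal.ofReal ((2 * r + 2 * ε + 1) * (2 * ε)) := by
  set I := Icc ⌈c - r - ε⌉ ⌊c + r + ε⌋
  have hcover : {x : ℝ | |x - c| ≤ r ∧ distToInt x < ε} ⊆
      ⋃ m ∈ I, Set.Ioo ((m : ℝ) - ε) (m + ε) := by
    rintro x ⟨hxc, hx⟩
    have hxc := abs_le.1 hxc
    have hx := abs_lt.1 hx
    refine Set.mem_biUnion (x := round x) ?_ ⟨by linarith, by linarith⟩
    exact mem_Icc.2 ⟨Int.ceil_le.2 (by linarith), Int.le_floor.2 (by linarith)⟩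
  have hcard : (#I : ℝ) ≤ 2 * r + 2 * ε + 1 := by
    have hfloor := Int.floor_le (c + r + ε)
    have hceil := Int.le_ceil (c - r - ε)
    rw [Int.card_Icc, ← Int.cast_natCast, Int.toNat_eq_max]
    push_cast
    exact max_le (by linarith) (by positivity)
  calc volume {x : ℝ | |x - c| ≤ r ∧ distToInt x < ε}
      ≤ ∑ m ∈ I, volume (Set.Ioo ((m : ℝ) - ε) (m + ε)) :=
        (measure_mono hcover).trans (measure_biUnion_finset_le _ _)
    _ = ENNReal.ofReal (#I * (2 * ε)) := by
        rw [ENNReal.ofReal_mul (Nat.cast_nonneg _), ENNReal.ofReal_natCast, ← nsmul_eq_mul,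
          ← sum_const]
        refine sum_congr rfl fun m _ => ?_
        rw [Real.volume_Ioo]
        ring_nf
    _ ≤ ENNReal.ofReal ((2 * r + 2 * ε + 1) * (2 * ε)) := by gcongr

lemma volume_setOf_cube_sum_mul_add_mem_le {ι : Type*} [Fintype ι] (a : ι → ℝ) {i : ι}
    (hai : a i ≠ 0) (c : ℝ) (U : Set ℝ) :
    volume {ω : ι → ℝ | (∀ k, |ω k| ≤ 1) ∧ ∑ k, a k * ω k + c ∈ U} ≤
      ENNReal.ofReal |a i|⁻¹ * volume U * 2 ^ (Fintype.card ι - 1) := by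
  classical
  -- `M` replaces the `i`-th coordinate by `∑ k, a k * ω k`; the cube becomes a product set
  set M : Matrix ι ι ℝ := (1 : Matrix ι ι ℝ).updateRow i a
  have hdet : LinearMap.det (Matrix.toLin' M) = a i := by
    have hrow : ∑ k, a k • (1 : Matrix ι ι ℝ) k = a := by
      ext j
      simp [Matrix.one_apply]
    simpa [M, hrow] using Matrix.det_updateRow_sum (1 : Matrix ι ι ℝ) i a
  set box : ι → Set ℝ := Function.update (fun _ => Set.Icc (-1) 1) i ((· + c) ⁻¹' U)
  have hsub : {ω : ι → ℝ | (∀ k, |ω k| ≤ 1) ∧ ∑ k, a k * ω k + c ∈ U} ⊆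
      Matrix.toLin' M ⁻¹' Set.univ.pi box := by
    rintro ω ⟨hω, hU⟩ k -
    rcases eq_or_ne k i with rfl | hk
    · simpa [box, M, Matrix.updateRow_mulVec, dotProduct] using hU
    · simpa [box, M, hk, Matrix.updateRow_mulVec] using abs_le.1 (hω k)
  calc volume {ω : ι → ℝ | (∀ k, |ω k| ≤ 1) ∧ ∑ k, a k * ω k + c ∈ U}
      ≤ volume (Matrix.toLin' M ⁻¹' Set.univ.pi box) := measure_mono hsub
    _ = ENNReal.ofReal |a i|⁻¹ * ∏ k, volume (box k) := by
        rw [Measure.addHaar_preimage_linearMap _ (hdet ▸ hai), hdet, volume_pi_pi, abs_inv]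
    _ = ENNReal.ofReal |a i|⁻¹ * volume U * 2 ^ (Fintype.card ι - 1) := by
        rw [← mul_prod_erase univ _ (mem_univ i), ← mul_assoc]
        congr 2
        · simp [box, measure_preimage_add_right]
        · have hIcc : ∀ k ∈ univ.erase i, volume (box k) = 2 := fun k hk => by
            simp [box, ne_of_mem_erase hk, Real.volume_Icc, one_add_one_eq_two]
          rw [prod_congr rfl hIcc, prod_const, card_erase_of_mem (mem_univ i), card_univ]

lemma pi_norm_int_eq_sup_natAbs {ι : Type*} [Fintype ι] (n : ι → ℤ) :
    ‖n‖ = ((univ.sup fun k => (n k).natAbs : ℕ) : ℝ) := by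
  rw [Pi.norm_def, ← NNReal.coe_natCast, Nat.cast_finsetSup]
  simp [NNReal.natCast_natAbs]

lemma exists_norm_apply_eq_pi_norm {ι E : Type*} [Fintype ι] [Nonempty ι] [SeminormedAddGroup E]
    (f : ι → E) : ∃ i, ‖f i‖ = ‖f‖ := by
  obtain ⟨i, -, hi⟩ := exists_mem_eq_sup univ univ_nonempty fun k => ‖f k‖₊
  exact ⟨i, by rw [Pi.norm_def, hi, coe_nnnorm]⟩

lemma one_le_pi_norm_int_of_ne_zero {ι : Type*} [Fintype ι] {n : ι → ℤ} (hn : n ≠ 0) :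
    1 ≤ ‖n‖ := by
  obtain ⟨k, hk⟩ := Function.ne_iff.1 hn
  calc (1 : ℝ) ≤ |(n k : ℝ)| := by exact_mod_cast Int.one_le_abs hk
    _ = ‖n k‖ := (Int.norm_eq_abs _).symm
    _ ≤ ‖n‖ := norm_le_pi_norm n k

lemma abs_sum_intCast_mul_le_card_mul_norm {ι : Type*} [Fintype ι] (n : ι → ℤ) {v : ι → ℝ}
    (hv : ∀ k, |v k| ≤ 1) : |∑ k, (n k : ℝ) * v k| ≤ Fintype.card ι * ‖n‖ :=
  calc |∑ k, (n k : ℝ) * v k| ≤ ∑ k, |(n k : ℝ) * v k| := abs_sum_le_sum_abs _ _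
    _ ≤ ∑ _k : ι, ‖n‖ := sum_le_sum fun k _ => by
        rw [abs_mul, ← mul_one ‖n‖]
        exact mul_le_mul (by rw [← Int.norm_eq_abs]; exact norm_le_pi_norm n k) (hv k)
          (abs_nonneg _) (norm_nonneg _)
    _ = Fintype.card ι * ‖n‖ := by simp

lemma summable_pi_int_norm_rpow_neg {ι : Type*} [Fintype ι] {s : ℝ}
    (hs : Fintype.card ι < s) : Summable fun n : ι → ℤ => ‖n‖ ^ (-s) := by
  let L := Submodule.span ℤ (Set.range (Pi.basisFun ℝ ι))
  have hrank : finrank ℤ L = Fintype.card ι := by rw [ZLattice.rank ℝ L]; simp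
  let φ : (ι → ℤ) → L := fun n =>
    ⟨fun k => n k, (Basis.mem_span_iff_repr_mem ℤ _ _).2 fun k => by simp⟩
  have hφ : Function.Injective φ := fun m n h => funext fun k => by
    simpa [φ] using congrFun (congrArg Subtype.val h) k
  refine ((ZLattice.summable_norm_rpow L (-s) (by rw [hrank]; linarith)).comp_injective hφ).congr
    fun n => ?_
  -- both sides are the sup norm of `n`
  rfl

/-- With `S = ‖n‖` and `x = ‖n‖ ^ γ`, the left side is the slab bound for the resonant set and
`h` is the condition under which that set can be nonempty. -/
lemma resonant_volume_bound_arith {N η S x ξ : ℝ} (hη : 0 < η) (hS : 0 < S) (hx : 1 ≤ x)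
    (hξ : 0 < ξ) (h : ξ ≤ N * η * S * x) :
    (η * S)⁻¹ * ((2 * (η * (N * S)) + 2 * (ξ / x ^ 3) + 1) * (2 * (ξ / x ^ 3))) ≤
      2 * N ^ 2 * (4 + ξ⁻¹) * η * (S / x) := by
  have hx0 : 0 < x := by linarith
  have hy : 0 < η * S := by positivity
  have hN : 0 < N := by
    by_contra! hN
    nlinarith [mul_pos (mul_pos hη hS) hx0]
  have hε : ξ / x ^ 3 ≤ ξ := div_le_self hξ.le (one_le_pow₀ hx)
  have honce : ξ / x ^ 3 ≤ N * (η * S) / x := by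
    rw [div_le_div_iff₀ (by positivity) hx0]
    have : x * 1 ≤ x * x ^ 2 := by gcongr; nlinarith
    nlinarith [mul_le_mul_of_nonneg_left this (by positivity : 0 ≤ N * (η * S) * x)]
  have htwice : ξ / x ^ 3 / (η * S) ≤ N ^ 2 * (η * S) / (ξ * x) := by
    rw [div_div, div_le_div_iff₀ (by positivity) (by positivity)]
    have : ξ * ξ ≤ (N * η * S * x) * (N * η * S * x) := mul_self_le_mul_self hξ.le h
    nlinarith [mul_le_mul_of_nonneg_left this hx0.le]
  calc (η * S)⁻¹ * ((2 * (η * (N * S)) + 2 * (ξ / x ^ 3) + 1) * (2 * (ξ / x ^ 3)))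
      = 4 * N * (ξ / x ^ 3) + 2 * (2 * (ξ / x ^ 3) + 1) * (ξ / x ^ 3 / (η * S)) := by
        field_simp
        ring
    _ ≤ 4 * N * (N * (η * S) / x) + 2 * (2 * ξ + 1) * (N ^ 2 * (η * S) / (ξ * x)) := by
        gcongr
    _ = 2 * N ^ 2 * (4 + ξ⁻¹) * η * (S / x) := by
        field_simp
        ring

section Resonance

variable {ι : Type*} [Fintype ι]

def resonantSet (ω₀ : ι → ℝ) (η ξ γ : ℝ) (n : ι → ℤ) : Set (ι → ℝ) :=
  {ω' | (∀ k, |ω' k| ≤ 1) ∧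
    distToInt (∑ k, (n k : ℝ) * (ω₀ k + η * ω' k)) < ξ / ‖n‖ ^ (3 * γ)}

lemma sum_intCast_mul_add_mul (n : ι → ℤ) (ω₀ ω' : ι → ℝ) (η : ℝ) :
    ∑ k, (n k : ℝ) * (ω₀ k + η * ω' k) = ∑ k, η * n k * ω' k + ∑ k, (n k : ℝ) * ω₀ k := by
  rw [add_comm, ← sum_add_distrib]
  exact sum_congr rfl fun k _ => by ring

lemma abs_sum_intCast_mul_add_mul_sub_le (n : ι → ℤ) (ω₀ : ι → ℝ) {ω' : ι → ℝ} {η : ℝ}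
    (hη : 0 ≤ η) (hω' : ∀ k, |ω' k| ≤ 1) :
    |∑ k, (n k : ℝ) * (ω₀ k + η * ω' k) - ∑ k, (n k : ℝ) * ω₀ k| ≤
      η * (Fintype.card ι * ‖n‖) := by
  simp_rw [sum_intCast_mul_add_mul, add_sub_cancel_right, mul_assoc, ← mul_sum, abs_mul,
    abs_of_nonneg hη]
  gcongr
  exact abs_sum_intCast_mul_le_card_mul_norm n hω'

variable {ω₀ : ι → ℝ} {n : ι → ℤ} {η ξ γ : ℝ}

lemma resonantSet_eq_empty (hn : n ≠ 0) (hγ : 0 ≤ γ) (hη : 0 ≤ η)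
    (hdio : 2 * ξ / ‖n‖ ^ γ ≤ distToInt (∑ k, (n k : ℝ) * ω₀ k))
    (hsmall : Fintype.card ι * η * ‖n‖ * ‖n‖ ^ γ < ξ) :
    resonantSet ω₀ η ξ γ n = ∅ := by
  have hS := one_le_pi_norm_int_of_ne_zero hn
  have hx : 0 < ‖n‖ ^ γ := by positivity
  have hξ : 0 ≤ ξ := le_trans (by positivity) hsmall.le
  have hpow : ‖n‖ ^ γ ≤ ‖n‖ ^ (3 * γ) := Real.rpow_le_rpow_of_exponent_le hS (by linarith)
  have hsmall' : η * (Fintype.card ι * ‖n‖) < ξ / ‖n‖ ^ γ := by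
    rw [lt_div_iff₀ hx]; linarith
  refine Set.eq_empty_iff_forall_notMem.2 fun ω' ⟨hω', hres⟩ => ?_
  have hshift := abs_sum_intCast_mul_add_mul_sub_le n ω₀ hη hω'
  have hdist := distToInt_le_add_abs_sub (∑ k, (n k : ℝ) * ω₀ k)
    (∑ k, (n k : ℝ) * (ω₀ k + η * ω' k))
  rw [abs_sub_comm] at hdist
  have hε : ξ / ‖n‖ ^ (3 * γ) ≤ ξ / ‖n‖ ^ γ := by gcongr
  have htwo : 2 * ξ / ‖n‖ ^ γ = ξ / ‖n‖ ^ γ + ξ / ‖n‖ ^ γ := by ring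
  linarith

lemma volume_resonantSet_le_of_le (hn : n ≠ 0) (hξ : 0 < ξ) (hγ : 0 ≤ γ) (hη : 0 < η)
    (hlarge : ξ ≤ Fintype.card ι * η * ‖n‖ * ‖n‖ ^ γ) :
    volume (resonantSet ω₀ η ξ γ n) ≤ ENNReal.ofReal
      (2 * Fintype.card ι ^ 2 * (4 + ξ⁻¹) * 2 ^ (Fintype.card ι - 1) * η * ‖n‖ ^ (1 - γ)) := by
  have hS := one_le_pi_norm_int_of_ne_zero hn
  have : Nonempty ι := let ⟨k, _⟩ := Function.ne_iff.1 hn; ⟨k⟩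
  obtain ⟨i, hi⟩ := exists_norm_apply_eq_pi_norm n
  have hai : η * n i ≠ 0 := mul_ne_zero hη.ne' (by simpa [← hi] using (zero_lt_one.trans_le hS).ne')
  have hx : 1 ≤ ‖n‖ ^ γ := Real.one_le_rpow hS hγ
  have hpow : ‖n‖ ^ (3 * γ) = (‖n‖ ^ γ) ^ 3 := by
    rw [mul_comm, Real.rpow_mul (by positivity), Real.rpow_ofNat]
  set c := ∑ k, (n k : ℝ) * ω₀ k
  set ε := ξ / (‖n‖ ^ γ) ^ 3
  set r := η * (Fintype.card ι * ‖n‖)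
  have hsub : resonantSet ω₀ η ξ γ n ⊆ {ω | (∀ k, |ω k| ≤ 1) ∧
      ∑ k, η * n k * ω k + c ∈ {x : ℝ | |x - c| ≤ r ∧ distToInt x < ε}} := by
    rintro ω' ⟨hω', hres⟩
    rw [sum_intCast_mul_add_mul] at hres
    refine ⟨hω', ?_, by rwa [hpow] at hres⟩
    simpa [sum_intCast_mul_add_mul] using abs_sum_intCast_mul_add_mul_sub_le n ω₀ hη.le hω'
  calc volume (resonantSet ω₀ η ξ γ n)
      ≤ ENNReal.ofReal |η * n i|⁻¹ * volume {x : ℝ | |x - c| ≤ r ∧ distToInt x < ε} *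
          2 ^ (Fintype.card ι - 1) :=
        (measure_mono hsub).trans (volume_setOf_cube_sum_mul_add_mem_le (fun k => η * n k) hai c _)
    _ ≤ ENNReal.ofReal (η * ‖n‖)⁻¹ * ENNReal.ofReal ((2 * r + 2 * ε + 1) * (2 * ε)) *
          ENNReal.ofReal (2 ^ (Fintype.card ι - 1)) := by
        rw [abs_mul, abs_of_pos hη, ← Int.norm_eq_abs, hi, ENNReal.ofReal_pow zero_le_two,
          ENNReal.ofReal_ofNat]
        gcongr
        exact volume_setOf_abs_sub_le_distToInt_lt_le c (by positivity) (by positivity)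
    _ ≤ ENNReal.ofReal
          (2 * Fintype.card ι ^ 2 * (4 + ξ⁻¹) * 2 ^ (Fintype.card ι - 1) * η * ‖n‖ ^ (1 - γ)) := by
        rw [← ENNReal.ofReal_mul (by positivity), ← ENNReal.ofReal_mul (by positivity)]
        refine ENNReal.ofReal_le_ofReal ?_
        calc (η * ‖n‖)⁻¹ * ((2 * r + 2 * ε + 1) * (2 * ε)) * 2 ^ (Fintype.card ι - 1)
            ≤ 2 * Fintype.card ι ^ 2 * (4 + ξ⁻¹) * η * (‖n‖ / ‖n‖ ^ γ) *
                2 ^ (Fintype.card ι - 1) :=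
              mul_le_mul_of_nonneg_right
                (resonant_volume_bound_arith hη (by positivity) hx hξ hlarge) (by positivity)
          _ = 2 * Fintype.card ι ^ 2 * (4 + ξ⁻¹) * 2 ^ (Fintype.card ι - 1) * η *
                ‖n‖ ^ (1 - γ) := by
              rw [Real.rpow_sub (by positivity), Real.rpow_one]
              ring

lemma volume_resonantSet_le (hn : n ≠ 0) (hξ : 0 < ξ) (hγ : 0 ≤ γ) (hη : 0 < η)
    (hdio : 2 * ξ / ‖n‖ ^ γ ≤ distToInt (∑ k, (n k : ℝ) * ω₀ k)) :
    volume (resonantSet ω₀ η ξ γ n) ≤ ENNReal.ofReal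
      (2 * Fintype.card ι ^ 2 * (4 + ξ⁻¹) * 2 ^ (Fintype.card ι - 1) * η * ‖n‖ ^ (1 - γ)) := by
  by_cases hlarge : ξ ≤ Fintype.card ι * η * ‖n‖ * ‖n‖ ^ γ
  · exact volume_resonantSet_le_of_le hn hξ hγ hη hlarge
  · simp [resonantSet_eq_empty hn hγ hη.le hdio (not_le.1 hlarge)]

end Resonance

theorem diophantine_perturbation_measure_general
    (b : ℕ) (hb : 1 ≤ b) (ξ γ : ℝ) (hξ : 0 < ξ) (hγ : 2 * b < γ)
    (p : ℕ) :
    ∃ C > (0 : ℝ), ∀ ω₀ : Fin b → ℝ,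
      (∀ n : Fin b → ℤ, n ≠ 0 →
        2 * ξ / ((Finset.univ.sup fun k => (n k).natAbs : ℕ) : ℝ) ^ γ ≤
          distToInt (∑ k, (n k : ℝ) * ω₀ k)) →
      ∃ δ₀ > (0 : ℝ), ∀ δ : ℝ, 0 < δ → δ < δ₀ →
        volume {ω' : Fin b → ℝ |
            (∀ k, |ω' k| ≤ 1) ∧
            ∃ n : Fin b → ℤ, n ≠ 0 ∧
              distToInt (∑ k, (n k : ℝ) * (ω₀ k + δ ^ p * ω' k)) <
                ξ / ((Finset.univ.sup fun k => (n k).natAbs : ℕ) : ℝ) ^ (3 * γ)}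
          ≤ ENNReal.ofReal (C * δ ^ p) := by
  have hb' : (1 : ℝ) ≤ b := by exact_mod_cast hb
  have : Nonempty (Fin b) := ⟨⟨0, hb⟩⟩
  have hsum : Summable fun n : Fin b → ℤ => ‖n‖ ^ (1 - γ) := by
    simpa using summable_pi_int_norm_rpow_neg (ι := Fin b) (s := γ - 1) (by simp; linarith)
  set C₀ := 2 * Fintype.card (Fin b) ^ 2 * (4 + ξ⁻¹) * 2 ^ (Fintype.card (Fin b) - 1)
  set K := ∑' n : Fin b → ℤ, ‖n‖ ^ (1 - γ)
  have hK : 0 < K := hsum.tsum_pos (fun _ => by positivity) (fun _ => 1) (by simp)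
  refine ⟨C₀ * K, by positivity, fun ω₀ hdio => ⟨1, one_pos, fun δ hδ _ => ?_⟩⟩
  simp_rw [← pi_norm_int_eq_sup_natAbs] at hdio ⊢
  have hη : 0 < δ ^ p := by positivity
  calc volume _ ≤ ∑' n, volume (⋃ (_ : n ≠ 0), resonantSet ω₀ (δ ^ p) ξ γ n) := by
        refine (measure_mono ?_).trans (measure_iUnion_le _)
        rintro ω' ⟨hω', n, hn, hres⟩
        exact Set.mem_iUnion₂.2 ⟨n, hn, hω', hres⟩
    _ ≤ ∑' n, ENNReal.ofReal (C₀ * δ ^ p * ‖n‖ ^ (1 - γ)) := by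
        refine ENNReal.tsum_le_tsum fun n => ?_
        by_cases hn : n = 0
        · simp [hn]
        · simp only [ne_eq, hn, not_false_eq_true, Set.iUnion_true]
          exact volume_resonantSet_le hn hξ (by linarith) hη (hdio n hn)
    _ = ENNReal.ofReal (C₀ * K * δ ^ p) := by
        rw [← ENNReal.ofReal_tsum_of_nonneg (fun _ => by positivity) (hsum.mul_left _),
          tsum_mul_left, mul_right_comm]

/-- If `ω⁰` is Diophantine with constants `2ξ`, `γ > 2b`, then for `δ` small the
set of `ω'` in the unit ball for which `ω = ω⁰ + δ^p ω'` fails the Diophantine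
condition with constants `ξ`, `3γ` has measure at most `C δ^p`, where `C`
depends only on `ξ`, `γ` and `b`. -/
theorem diophantine_perturbation_measure
    (b : ℕ) (hb : 1 ≤ b) (ξ γ : ℝ) (hξ : 0 < ξ) (hγ : 2 * b < γ)
    (p : ℕ) (hp : 1 ≤ p) :
    ∃ C > (0 : ℝ), ∀ ω₀ : Fin b → ℝ,
      (∀ n : Fin b → ℤ, n ≠ 0 →
        2 * ξ / ((Finset.univ.sup fun k => (n k).natAbs : ℕ) : ℝ) ^ γ ≤
          distToInt (∑ k, (n k : ℝ) * ω₀ k)) →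
      ∃ δ₀ > (0 : ℝ), ∀ δ : ℝ, 0 < δ → δ < δ₀ →
        volume {ω' : Fin b → ℝ |
            (∀ k, |ω' k| ≤ 1) ∧
            ∃ n : Fin b → ℤ, n ≠ 0 ∧
              distToInt (∑ k, (n k : ℝ) * (ω₀ k + δ ^ p * ω' k)) <
                ξ / ((Finset.univ.sup fun k => (n k).natAbs : ℕ) : ℝ) ^ (3 * γ)}
          ≤ ENNReal.ofReal (C * δ ^ p) :=
  diophantine_perturbation_measure_general b hb ξ γ hξ hγ p
end
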